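/- Let (𝒳, 𝒴) be a cotorsion theory in an abelian category 𝒜 such that 𝒜 has enough objects of the class of Y ∈ 𝒴 for which every short exact sequence starting with Y and ending in 𝒳 is left split, and suppose 𝒳 = ^⊥𝒮 for some class 𝒮 ⊆ 𝒴. Then the class ex(𝒳) of exact chain complexes with all entries in 𝒳 is the left class of a cotorsion theory in the category Ch(𝒜) of chain complexes: (ex(𝒳), ex(𝒳)^⊥) is a cotorsion theory. -/

import Mathlib

open CategoryTheory Limits

universe v' u' v u

section Perp

variable {𝒞 : Type u'} [Category.{v'} 𝒞] [Abelian 𝒞]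

/-- `Y ∈ rightPerpSplit K` iff every short exact sequence `Y ↣ E ↠ Q` with `Q ∈ K`
splits. -/
def rightPerpSplit (K : Set 𝒞) : Set 𝒞 :=
  {Y | ∀ ⦃E Q : 𝒞⦄ (i : Y ⟶ E) (p : E ⟶ Q) (w : i ≫ p = 0),
    (ShortComplex.mk i p w).ShortExact → Q ∈ K → ∃ r : E ⟶ Y, i ≫ r = 𝟙 Y}

/-- `X ∈ leftPerpSplit K` iff every short exact sequence `Y ↣ E ↠ X` with `Y ∈ K`
splits. -/
def leftPerpSplit (K : Set 𝒞) : Set 𝒞 :=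
  {X | ∀ ⦃Y E : 𝒞⦄ (i : Y ⟶ E) (p : E ⟶ X) (w : i ≫ p = 0),
    (ShortComplex.mk i p w).ShortExact → Y ∈ K → ∃ s : X ⟶ E, s ≫ p = 𝟙 X}

end Perp

variable {𝒜 : Type u} [Category.{v} 𝒜] [Abelian 𝒜]

/-- The class of acyclic (exact) complexes that are degreewise in `𝒳`. -/
def exCls (𝒳 : Set 𝒜) : Set (ChainComplex 𝒜 ℤ) :=
  {K | (∀ n : ℤ, K.ExactAt n) ∧ ∀ n : ℤ, K.X n ∈ 𝒳}

/-- `𝒴̲`: the objects `Y ∈ 𝒴` such that every exact sequence `Y ↣ A → X` with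
`X ∈ 𝒳` is left split. -/
def underline (𝒳 𝒴 : Set 𝒜) : Set 𝒜 :=
  {Y | Y ∈ 𝒴 ∧ ∀ ⦃A X : 𝒜⦄ (i : Y ⟶ A) (v : A ⟶ X) (w : i ≫ v = 0),
    Mono i → (ShortComplex.mk i v w).Exact → X ∈ 𝒳 → ∃ r : A ⟶ Y, i ≫ r = 𝟙 Y}

/-!
Any class lies in the left orthogonal of its right orthogonal, so only the inclusion of
`^⊥(ex(𝒳)^⊥)` in `ex(𝒳)` needs work. Let `K` be in that left orthogonal; by pulling back,
every map from `K` to the quotient of a short exact sequence whose kernel lies in `ex(𝒳)^⊥`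
lifts.

*Exactness.* For `Y ∈ 𝒴̲` the sphere `Y[n-1]` lies in `ex(𝒳)^⊥`: given `Y[n-1] ↣ E ↠ Q` with
`Q ∈ ex(𝒳)`, `Y` embeds into `coker d^E` with cokernel inside `Q_{n-2} ∈ 𝒳`, and the defining
property of `𝒴̲` yields the retraction. Lifting along the disk sequence
`Y[n-1] ↣ D^n(Y) ↠ Y[n]` shows that every map `K_n → Y` killing the boundaries factors through
`d_n`. Embedding `coker d_{n+1}` into an object of `𝒴̲` then makes
`coker d_{n+1} → K_{n-1}` a monomorphism, i.e. `K` is exact at `n`.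

*Entries.* For `Y ∈ 𝒴 = 𝒳^⊥` the disk `D^k(Y)` lies in `ex(𝒳)^⊥`, since maps `C → D^k(B)`
correspond to maps `C_{k-1} → B`. Applying the exact functor `D^k` to a sequence
`Y ↣ A ↠ K_{k-1}` and lifting the map `K → D^k(K_{k-1})` corresponding to the identity splits
the sequence, so `K_{k-1} ∈ ^⊥𝒴 = 𝒳`.
-/

open HomologicalComplex

section Orthogonality

variable {𝒞 : Type u'} [Category.{v'} 𝒞] [Abelian 𝒞]

lemma subset_leftPerpSplit_rightPerpSplit (K : Set 𝒞) : K ⊆ leftPerpSplit (rightPerpSplit K) :=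
  fun _ hX _ _ i p w hS hY =>
    let ⟨r, hr⟩ := hY i p w hS hX
    let σ := ShortComplex.Splitting.ofExactOfRetraction _ hS.exact r hr hS.epi_g
    ⟨σ.s, σ.s_g⟩

lemma mem_rightPerpSplit_of_iso {K : Set 𝒞} {X Y : 𝒞} (e : X ≅ Y) (hY : Y ∈ rightPerpSplit K) :
    X ∈ rightPerpSplit K := by
  intro E Q i p w hS hQ
  obtain ⟨r, hr⟩ := hY (e.inv ≫ i) p (by simp [w]) (ShortComplex.shortExact_of_iso
    (ShortComplex.isoMk (S₁ := ShortComplex.mk i p w) e (Iso.refl _) (Iso.refl _)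
      (by simp) (by simp)) hS) hQ
  exact ⟨r ≫ e.inv, by simpa using e.hom ≫= hr =≫ e.inv⟩

lemma shortExact_pullback {S : ShortComplex 𝒞} (hS : S.ShortExact) {X : 𝒞} (φ : X ⟶ S.X₃) :
    (ShortComplex.mk (pullback.lift S.f 0 (by simp) : S.X₁ ⟶ pullback S.g φ)
      (pullback.snd S.g φ) (pullback.lift_snd _ _ _)).ShortExact := by
  have := hS.epi_g
  have := hS.mono_f
  have : Mono (pullback.lift S.f 0 (by simp) : S.X₁ ⟶ pullback S.g φ) :=
    mono_of_mono_fac (pullback.lift_fst _ _ _)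
  refine { exact := ShortComplex.exact_of_f_is_kernel _ ?_ }
  refine KernelFork.IsLimit.ofι' _ _ (fun {Z} u (hu : u ≫ pullback.snd S.g φ = 0) => ?_)
  obtain ⟨l, hl⟩ := KernelFork.IsLimit.lift' hS.fIsKernel (u ≫ pullback.fst S.g φ)
    (by simp [pullback.condition, reassoc_of% hu])
  refine ⟨l, pullback.hom_ext ?_ ?_⟩
  · dsimp only
    rw [Category.assoc, pullback.lift_fst]
    exact hl
  · dsimp only
    rw [Category.assoc, pullback.lift_snd, comp_zero, hu]

lemma exists_lift_of_mem_leftPerpSplit {K : Set 𝒞} {X : 𝒞} (hX : X ∈ leftPerpSplit K)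
    {S : ShortComplex 𝒞} (hS : S.ShortExact) (h₁ : S.X₁ ∈ K) (φ : X ⟶ S.X₃) :
    ∃ ψ : X ⟶ S.X₂, ψ ≫ S.g = φ := by
  obtain ⟨s, hs⟩ := hX _ _ _ (shortExact_pullback hS φ) h₁
  exact ⟨s ≫ pullback.fst S.g φ, by simp [pullback.condition, reassoc_of% hs]⟩

end Orthogonality

section Homology

variable {𝒞 : Type u'} [Category.{v'} 𝒞] [Abelian 𝒞]

lemma shortExact_biprod {S T : ShortComplex 𝒞} (hS : S.ShortExact) (hT : T.ShortExact) :
    (ShortComplex.mk (biprod.map S.f T.f) (biprod.map S.g T.g)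
      (by ext <;> simp)).ShortExact := by
  have := hS.mono_f; have := hT.mono_f; have := hS.epi_g; have := hT.epi_g
  refine { exact := ShortComplex.exact_of_f_is_kernel _ ?_ }
  refine KernelFork.IsLimit.ofι' _ _ (fun {Z} u hu => ?_)
  obtain ⟨lS, hlS⟩ := KernelFork.IsLimit.lift' hS.fIsKernel (u ≫ biprod.fst)
    (by simpa using hu =≫ biprod.fst)
  obtain ⟨lT, hlT⟩ := KernelFork.IsLimit.lift' hT.fIsKernel (u ≫ biprod.snd)
    (by simpa using hu =≫ biprod.snd)
  exact ⟨biprod.lift lS lT, biprod.hom_ext _ _ (by simpa using hlS) (by simpa using hlT)⟩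

lemma HomologicalComplex.exactAt_iff_mono_fromOpcycles {ι : Type*} {c : ComplexShape ι}
    (K : HomologicalComplex 𝒞 c) {i j : ι} (hij : c.next i = j) :
    K.ExactAt i ↔ Mono (K.fromOpcycles i j) := by
  refine ⟨fun h => Preadditive.mono_of_isZero_kernel' _ (K.homologyIsKernel i j hij)
    h.isZero_homology, fun _ => ?_⟩
  rw [exactAt_iff_isZero_homology]
  exact IsZero.of_mono_eq_zero (K.homologyι i) (by simp [← cancel_mono (K.fromOpcycles i j)])

lemma HomologicalComplex.mono_opcyclesMap_of_shortExact {ι : Type*} {c : ComplexShape ι}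
    {S : ShortComplex (HomologicalComplex 𝒞 c)} (hS : S.ShortExact) {i j : ι} (hij : c.Rel i j)
    (h₃ : S.X₃.ExactAt i) (h₁ : S.X₁.d j (c.next j) = 0) :
    Mono (opcyclesMap S.f j) := by
  have : Mono (homologyMap S.f j) :=
    (hS.homology_exact₁ i j hij).mono_g (h₃.isZero_homology.eq_of_src _ _)
  have := S.X₁.isIso_homologyι j _ rfl h₁
  have hfac : inv (S.X₁.homologyι j) ≫ homologyMap S.f j ≫ S.X₂.homologyι j =
      opcyclesMap S.f j := by
    simp [homologyι_naturality]
  rw [← hfac]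
  infer_instance

end Homology

section Sphere

lemma single_mem_rightPerpSplit_exCls {𝒳 𝒴 : Set 𝒜} {Y : 𝒜} (hY : Y ∈ underline 𝒳 𝒴) (k : ℤ) :
    (single 𝒜 (ComplexShape.down ℤ) k).obj Y ∈ rightPerpSplit (exCls 𝒳) := by
  intro E Q i p w hS hQ
  let σ := singleObjXSelf (ComplexShape.down ℤ) k Y
  have : Mono (opcyclesMap i k) :=
    mono_opcyclesMap_of_shortExact hS (i := k + 1) (by simp) (hQ.1 (k + 1)) (by simp)
  have : IsIso (((single 𝒜 (ComplexShape.down ℤ) k).obj Y).pOpcycles k) :=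
    isIso_pOpcycles _ (k + 1) k (by simp) (by simp)
  have : Mono (Q.fromOpcycles k (k - 1)) :=
    (Q.exactAt_iff_mono_fromOpcycles (by simp)).1 (hQ.1 k)
  let u : Y ⟶ E.opcycles k := σ.inv ≫ i.f k ≫ E.pOpcycles k
  let v : E.opcycles k ⟶ Q.X (k - 1) := opcyclesMap p k ≫ Q.fromOpcycles k (k - 1)
  have huv : u ≫ v = 0 := by simp [u, v]
  let φ : ShortComplex.mk (opcyclesMap i k) (opcyclesMap p k)
      (by rw [← opcyclesMap_comp, w, opcyclesMap_zero]) ⟶ ShortComplex.mk u v huv :=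
    { τ₁ := inv (((single 𝒜 (ComplexShape.down ℤ) k).obj Y).pOpcycles k) ≫ σ.hom
      τ₂ := 𝟙 _
      τ₃ := Q.fromOpcycles k (k - 1)
      comm₁₂ := by simp [u]
      comm₂₃ := by simp [v] }
  have := hS.epi_g
  have hexact : (ShortComplex.mk u v huv).Exact :=
    (ShortComplex.exact_iff_of_epi_of_isIso_of_mono φ).1
      (opcycles_right_exact (ShortComplex.mk i p w) hS.exact k)
  have : Mono u := by simp only [u, ← p_opcyclesMap]; infer_instance
  obtain ⟨r, hr⟩ := hY.2 u v huv inferInstance hexact (hQ.2 (k - 1))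
  refine ⟨mkHomToSingle (E.pOpcycles k ≫ r) (fun j _ => by simp), ?_⟩
  ext
  have hiu : i.f k ≫ E.pOpcycles k = σ.hom ≫ u := by simp [u]
  simp [reassoc_of% hiu, reassoc_of% hr, σ]

end Sphere

namespace ChainComplex

local notation "𝕊" => single 𝒜 (ComplexShape.down ℤ)

variable (k : ℤ)

noncomputable def diskDiff (Y : 𝒜) (i j : ℤ) : ((𝕊 k).obj Y).X i ⟶ ((𝕊 (k - 1)).obj Y).X j :=
  if h : i = k ∧ j = k - 1 then
    (singleObjXIsoOfEq _ k Y i h.1).hom ≫ (singleObjXIsoOfEq _ (k - 1) Y j h.2).inv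
  else 0

lemma diskDiff_self (Y : 𝒜) :
    diskDiff k Y k (k - 1) =
      (singleObjXSelf _ k Y).hom ≫ (singleObjXSelf _ (k - 1) Y).inv :=
  dif_pos ⟨rfl, rfl⟩

lemma diskDiff_eq_zero (Y : 𝒜) {i j : ℤ} (h : ¬ (i = k ∧ j = k - 1)) : diskDiff k Y i j = 0 :=
  dif_neg h

lemma diskDiff_naturality {Y Y' : 𝒜} (g : Y ⟶ Y') (i j : ℤ) :
    ((𝕊 k).map g).f i ≫ diskDiff k Y' i j = diskDiff k Y i j ≫ ((𝕊 (k - 1)).map g).f j := by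
  by_cases h : i = k ∧ j = k - 1
  · obtain ⟨rfl, rfl⟩ := h
    simp [diskDiff_self, single_map_f_self]
  · simp [diskDiff_eq_zero k _ h]

/-- The disk `D^k(Y)`, i.e. `𝟙 Y` placed in degrees `k → k - 1`, built degreewise as the
biproduct of the spheres `Y[k]` and `Y[k - 1]`. -/
noncomputable abbrev disk : 𝒜 ⥤ ChainComplex 𝒜 ℤ where
  obj Y :=
    { X m := ((𝕊 k).obj Y).X m ⊞ ((𝕊 (k - 1)).obj Y).X m
      d i j := biprod.fst ≫ diskDiff k Y i j ≫ biprod.inr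
      shape i j h := by
        rw [diskDiff_eq_zero k Y (by rintro ⟨rfl, rfl⟩; exact h (by simp)), zero_comp, comp_zero] }
  map g :=
    { f m := biprod.map (((𝕊 k).map g).f m) (((𝕊 (k - 1)).map g).f m)
      comm' i j _ := by simp [reassoc_of% diskDiff_naturality] }
  map_id Y := by ext m : 1; apply biprod.hom_ext <;> simp
  map_comp f g := by ext m : 1; apply biprod.hom_ext <;> simp

instance : (disk (𝒜 := 𝒜) k).PreservesZeroMorphisms where
  map_zero _ _ := by
    ext m : 1
    change biprod.map (((𝕊 k).map 0).f m) (((𝕊 (k - 1)).map 0).f m) = 0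
    simp [biprod.map_eq]

@[simps]
noncomputable def diskι (Y : 𝒜) : (𝕊 (k - 1)).obj Y ⟶ (disk k).obj Y where
  f _ := biprod.inr

@[simps]
noncomputable def diskπ (Y : 𝒜) : (disk k).obj Y ⟶ (𝕊 k).obj Y where
  f _ := biprod.fst

lemma shortExact_disk (Y : 𝒜) :
    (ShortComplex.mk (diskι k Y) (diskπ k Y) (by ext; simp)).ShortExact :=
  (shortExact_iff_degreewise_shortExact _).2 fun _ => ShortComplex.Splitting.shortExact
    { r := biprod.snd
      s := biprod.inl
      f_r := biprod.inr_snd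
      s_g := biprod.inl_fst
      id := by rw [add_comm]; exact biprod.total }

lemma shortExact_map_disk {S : ShortComplex 𝒜} (hS : S.ShortExact) :
    (S.map (disk k)).ShortExact := by
  rw [shortExact_iff_degreewise_shortExact]
  exact fun m => shortExact_biprod
    ((shortExact_iff_degreewise_shortExact _).1 (hS.map_of_exact (𝕊 k)) m)
    ((shortExact_iff_degreewise_shortExact _).1 (hS.map_of_exact (𝕊 (k - 1))) m)

noncomputable def diskXIso (Y : 𝒜) : ((disk k).obj Y).X (k - 1) ≅ Y where
  hom := biprod.snd ≫ (singleObjXSelf _ (k - 1) Y).hom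
  inv := (singleObjXSelf _ (k - 1) Y).inv ≫ biprod.inr
  hom_inv_id := biprod.hom_ext _ _ ((isZero_single_obj_X _ _ _ _ (by omega)).eq_of_tgt _ _) (by simp)

lemma disk_d_diskXIso_hom (Y : 𝒜) :
    ((disk k).obj Y).d k (k - 1) ≫ (diskXIso k Y).hom =
      biprod.fst ≫ (singleObjXSelf _ k Y).hom := by
  simp [diskXIso, diskDiff_self]

lemma map_disk_f_diskXIso_hom {Y Y' : 𝒜} (g : Y ⟶ Y') :
    ((disk k).map g).f (k - 1) ≫ (diskXIso k Y').hom = (diskXIso k Y).hom ≫ g := by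
  simp [diskXIso, single_map_f_self]

lemma disk_hom_ext {K : ChainComplex 𝒜 ℤ} {Y : 𝒜} {φ ψ : K ⟶ (disk k).obj Y}
    (h : φ.f (k - 1) = ψ.f (k - 1)) : φ = ψ := by
  ext m : 1
  by_cases hk : m = k
  · subst hk
    refine biprod.hom_ext _ _ ?_ ((isZero_single_obj_X _ _ _ _ (by omega)).eq_of_tgt _ _)
    rw [← cancel_mono (singleObjXSelf _ m Y).hom, Category.assoc, Category.assoc,
      ← disk_d_diskXIso_hom, φ.comm_assoc, ψ.comm_assoc, h]
  by_cases hk' : m = k - 1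
  · exact hk' ▸ h
  · exact IsZero.eq_of_tgt (biprod_isZero_iff _ _ |>.2
      ⟨isZero_single_obj_X _ _ _ _ hk, isZero_single_obj_X _ _ _ _ hk'⟩) _ _

noncomputable def toDisk {K : ChainComplex 𝒜 ℤ} {Y : 𝒜} (t : K.X (k - 1) ⟶ Y) :
    K ⟶ (disk k).obj Y where
  f m := biprod.lift
    ((mkHomToSingle (K.d k (k - 1) ≫ t) (fun _ _ => by simp)).f m)
    (if h : m = k - 1 then
      (K.XIsoOfEq h).hom ≫ t ≫ (singleObjXIsoOfEq _ (k - 1) Y m h).inv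
     else 0)
  comm' i j hij := by
    apply biprod.hom_ext
    · simp [← (mkHomToSingle (K.d k (k - 1) ≫ t) _).comm i j]
    · by_cases h : j = k - 1
      · obtain rfl := h
        obtain rfl : i = k := by simp at hij; omega
        simp [diskDiff_self, singleObjXSelf]
      · simp [h, diskDiff_eq_zero k Y (by tauto : ¬ (i = k ∧ j = k - 1))]

lemma toDisk_f_diskXIso_hom {K : ChainComplex 𝒜 ℤ} {Y : 𝒜} (t : K.X (k - 1) ⟶ Y) :
    (toDisk k t).f (k - 1) ≫ (diskXIso k Y).hom = t := by
  simp [toDisk, diskXIso, singleObjXSelf]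

lemma disk_obj_mem_rightPerpSplit_exCls {𝒳 : Set 𝒜} {Y : 𝒜} (hY : Y ∈ rightPerpSplit 𝒳) :
    (disk k).obj Y ∈ rightPerpSplit (exCls 𝒳) := by
  intro E Q i p w hS hQ
  obtain ⟨r, hr⟩ : ∃ r : E.X (k - 1) ⟶ ((disk k).obj Y).X (k - 1), i.f (k - 1) ≫ r = 𝟙 _ :=
    mem_rightPerpSplit_of_iso (diskXIso k Y) hY _ _ _
    ((shortExact_iff_degreewise_shortExact _).1 hS (k - 1)) (hQ.2 (k - 1))
  refine ⟨toDisk k (r ≫ (diskXIso k Y).hom), disk_hom_ext k ?_⟩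
  rw [← cancel_mono (diskXIso k Y).hom]
  simp [toDisk_f_diskXIso_hom, reassoc_of% hr]

end ChainComplex

section LeftPerpExCls

open ChainComplex

variable {𝒳 : Set 𝒜} {K : ChainComplex 𝒜 ℤ} (hK : K ∈ leftPerpSplit (rightPerpSplit (exCls 𝒳)))
include hK

lemma exists_d_comp_eq_of_mem_leftPerpSplit {𝒴 : Set 𝒜} {Y : 𝒜} (hY : Y ∈ underline 𝒳 𝒴)
    (n : ℤ) (f : K.X n ⟶ Y) (hf : K.d (n + 1) n ≫ f = 0) :
    ∃ t : K.X (n - 1) ⟶ Y, K.d n (n - 1) ≫ t = f := by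
  obtain ⟨ψ, hψ⟩ := exists_lift_of_mem_leftPerpSplit hK (shortExact_disk n Y)
    (single_mem_rightPerpSplit_exCls hY (n - 1)) (mkHomToSingle f fun _ hi => hi ▸ hf)
  refine ⟨ψ.f (n - 1) ≫ (diskXIso n Y).hom, ?_⟩
  have hψn : ψ.f n ≫ biprod.fst = f ≫ (singleObjXSelf _ n Y).inv := by
    simpa using congr_arg (·.f n) hψ
  rw [← ψ.comm_assoc, disk_d_diskXIso_hom, reassoc_of% hψn, Iso.inv_hom_id, Category.comp_id]

lemma exactAt_of_mem_leftPerpSplit {𝒴 : Set 𝒜}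
    (henough : ∀ A : 𝒜, ∃ (Y : 𝒜) (i : A ⟶ Y), Y ∈ underline 𝒳 𝒴 ∧ Mono i) (n : ℤ) :
    K.ExactAt n := by
  rw [K.exactAt_iff_mono_fromOpcycles (j := n - 1) (by simp)]
  obtain ⟨Y, u, hY, hu⟩ := henough (K.opcycles n)
  obtain ⟨t, ht⟩ := exists_d_comp_eq_of_mem_leftPerpSplit hK hY n (K.pOpcycles n ≫ u) (by simp)
  have hfac : K.fromOpcycles n (n - 1) ≫ t = u := by
    rw [← cancel_epi (K.pOpcycles n), p_fromOpcycles_assoc, ht]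
  exact mono_of_mono_fac hfac

lemma X_mem_leftPerpSplit_of_mem_leftPerpSplit (k : ℤ) :
    K.X (k - 1) ∈ leftPerpSplit (rightPerpSplit 𝒳) := by
  intro Y A i p w hS hY
  obtain ⟨θ, hθ⟩ : ∃ θ : K ⟶ (disk k).obj A, θ ≫ (disk k).map p = toDisk k (𝟙 _) :=
    exists_lift_of_mem_leftPerpSplit hK (shortExact_map_disk k hS)
    (disk_obj_mem_rightPerpSplit_exCls k hY) (toDisk k (𝟙 (K.X (k - 1))))
  refine ⟨θ.f (k - 1) ≫ (diskXIso k A).hom, ?_⟩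
  rw [Category.assoc, ← map_disk_f_diskXIso_hom, ← comp_f_assoc, hθ, toDisk_f_diskXIso_hom]

end LeftPerpExCls

theorem statement16_general (𝒳 𝒴 : Set 𝒜)
    (hX : 𝒳 = leftPerpSplit 𝒴) (hY : 𝒴 = rightPerpSplit 𝒳)
    (henough : ∀ A : 𝒜, ∃ (Y : 𝒜) (i : A ⟶ Y), Y ∈ underline 𝒳 𝒴 ∧ Mono i) :
    leftPerpSplit (rightPerpSplit (exCls 𝒳)) = exCls 𝒳 := by
  refine Set.Subset.antisymm (fun K hK => ⟨exactAt_of_mem_leftPerpSplit hK henough, fun n => ?_⟩)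
    (subset_leftPerpSplit_rightPerpSplit _)
  rw [hX, hY]
  simpa using X_mem_leftPerpSplit_of_mem_leftPerpSplit hK (n + 1)

/-- If `(𝒳, 𝒴)` is a cotorsion theory with `𝒳 = ^⊥𝒮` for some `𝒮 ⊆ 𝒴` and `𝒜` has
enough `𝒴̲` objects, then `(ex(𝒳), ex(𝒳)^⊥)` is a cotorsion theory in `Ch(𝒜)`. -/
theorem statement16 (𝒳 𝒴 : Set 𝒜)
    (hX : 𝒳 = leftPerpSplit 𝒴) (hY : 𝒴 = rightPerpSplit 𝒳)
    (𝒮 : Set 𝒜) (h𝒮 : 𝒮 ⊆ 𝒴) (hX𝒮 : 𝒳 = leftPerpSplit 𝒮)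
    (henough : ∀ A : 𝒜, ∃ (Y : 𝒜) (i : A ⟶ Y), Y ∈ underline 𝒳 𝒴 ∧ Mono i) :
    leftPerpSplit (rightPerpSplit (exCls 𝒳)) = exCls 𝒳 :=
  statement16_general 𝒳 𝒴 hX hY henough
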